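/- The local trajectory is specified uniquely by the flat tetrahedron together with the gradient: if a,b ∈ ℤ⁴, i,j,k ∈ {1,2,3,4} are pairwise distinct, and π(T(a;i,j,k)) = π(T(b;i,j,k)), then π(T(a+eᵢ;j,k,i)) = π(T(b+eᵢ;j,k,i)) and π(T(a−e_k;k,i,j)) = π(T(b−e_k;k,i,j)); that is, the two slant tetrahedrons define the same local trajectory of flat tetrahedrons. -/

import Mathlib

noncomputable section

/-- Ambient space ℝ⁴. -/
abbrev E4 := EuclideanSpace ℝ (Fin 4)

/-- Standard basis vector eᵢ of ℝ⁴. -/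
def ee4 (i : Fin 4) : E4 := EuclideanSpace.single i 1

/-- 𝟙 = e₁ + e₂ + e₃ + e₄. -/
def ones4 : E4 := ∑ i, ee4 i

/-- Orthogonal projection π onto the hyperplane H = {v ∈ ℝ⁴ : v₁+v₂+v₃+v₄ = 0},
    given by π(v) = v − ((v₁+v₂+v₃+v₄)/4)·𝟙. -/
def proj4 (v : E4) : E4 := v - ((∑ i, v i) / 4) • ones4

/-- A lattice point of ℤ⁴ viewed in ℝ⁴. -/
def toE4 (a : Fin 4 → ℤ) : E4 := WithLp.toLp 2 (fun n => (a n : ℝ))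

/-- Slant tetrahedron T(a;i,j,k) = conv{a, a+eᵢ, a+eᵢ+eⱼ, a+eᵢ+eⱼ+e_k}. -/
def slant4 (a : Fin 4 → ℤ) (i j k : Fin 4) : Set E4 :=
  convexHull ℝ {toE4 a, toE4 a + ee4 i, toE4 a + ee4 i + ee4 j,
    toE4 a + ee4 i + ee4 j + ee4 k}

/-- Flat tetrahedron: the image π(T(a;i,j,k)). -/
def flat4 (a : Fin 4 → ℤ) (i j k : Fin 4) : Set E4 := proj4 '' slant4 a i j k

/-! Translating the base point of a slant tetrahedron by `c ∈ ℤ⁴` translates its flat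
tetrahedron by `π(c)`. A nonempty bounded set is invariant under no nonzero translation, so
`π(T(a;i,j,k)) = π(T(b;i,j,k))` forces `π(a) = π(b)`, and then the flat tetrahedra based at
`a + c` and `b + c` agree for every `c` and every gradient. -/

open scoped Pointwise

section BoundedTranslate

variable {V : Type*} [NormedAddCommGroup V] [NormedSpace ℝ V] {s : Set V}

theorem eq_zero_of_vadd_set_eq_self (hne : s.Nonempty) (hb : Bornology.IsBounded s) {v : V}
    (h : v +ᵥ s = s) : v = 0 := by
  obtain ⟨x, hx⟩ := hne
  obtain ⟨R, hR⟩ := hb.subset_closedBall x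
  have hiter : ∀ n : ℕ, (n • v) +ᵥ s = s := by
    intro n
    induction n with
    | zero => simp
    | succ n ih => rw [succ_nsmul', ← vadd_vadd, ih, h]
  have hle : ∀ n : ℕ, n * ‖v‖ ≤ R := by
    intro n
    have hmem := hR (hiter n ▸ Set.vadd_mem_vadd_set hx : n • v +ᵥ x ∈ s)
    rwa [Metric.mem_closedBall, vadd_eq_add, dist_add_self_left, RCLike.norm_nsmul ℝ,
      nsmul_eq_mul] at hmem
  by_contra hv
  obtain ⟨n, hn⟩ := exists_nat_gt (R / ‖v‖)
  rw [div_lt_iff₀ (norm_pos_iff.mpr hv)] at hn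
  exact (hle n).not_gt hn

theorem eq_of_vadd_set_eq (hne : s.Nonempty) (hb : Bornology.IsBounded s) {u v : V}
    (h : u +ᵥ s = v +ᵥ s) : u = v := by
  refine sub_eq_zero.mp (eq_zero_of_vadd_set_eq_self hne hb ?_)
  rw [sub_eq_neg_add, ← vadd_vadd, h, neg_vadd_vadd]

end BoundedTranslate

def proj4L : E4 →ₗ[ℝ] E4 :=
  IsLinearMap.mk' proj4 <| by
    constructor
    · intro x y
      simp only [proj4, PiLp.add_apply, Finset.sum_add_distrib, add_div, add_smul]
      abel
    · intro c x
      simp only [proj4, PiLp.smul_apply, smul_eq_mul, ← Finset.mul_sum, mul_div_assoc,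
        mul_smul, smul_sub]

theorem coe_proj4L : ⇑proj4L = proj4 := rfl

theorem toE4_add (a c : Fin 4 → ℤ) : toE4 (a + c) = toE4 a + toE4 c := by
  ext n
  simp [toE4]

theorem slant4_add (a c : Fin 4 → ℤ) (i j k : Fin 4) :
    slant4 (a + c) i j k = toE4 a +ᵥ slant4 c i j k := by
  simp only [slant4, ← convexHull_vadd, Set.vadd_set_insert, Set.vadd_set_singleton,
    vadd_eq_add, toE4_add, add_assoc]

theorem flat4_add (a c : Fin 4 → ℤ) (i j k : Fin 4) :
    flat4 (a + c) i j k = proj4 (toE4 a) +ᵥ flat4 c i j k := by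
  rw [flat4, flat4, slant4_add, ← coe_proj4L, Set.image_vadd_distrib]

theorem isCompact_slant4 (a : Fin 4 → ℤ) (i j k : Fin 4) : IsCompact (slant4 a i j k) :=
  (Set.toFinite _).isCompact_convexHull (𝕜 := ℝ)

theorem isCompact_flat4 (a : Fin 4 → ℤ) (i j k : Fin 4) : IsCompact (flat4 a i j k) :=
  (isCompact_slant4 a i j k).image proj4L.continuous_of_finiteDimensional

theorem flat4_nonempty (a : Fin 4 → ℤ) (i j k : Fin 4) : (flat4 a i j k).Nonempty :=
  ⟨_, Set.mem_image_of_mem proj4 (subset_convexHull ℝ _ (Set.mem_insert _ _))⟩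

theorem proj4_toE4_eq_of_flat4_eq {a b : Fin 4 → ℤ} {i j k : Fin 4}
    (h : flat4 a i j k = flat4 b i j k) : proj4 (toE4 a) = proj4 (toE4 b) := by
  refine eq_of_vadd_set_eq (flat4_nonempty 0 i j k) (isCompact_flat4 0 i j k).isBounded ?_
  simpa only [← flat4_add, add_zero] using h

theorem stmt15_general (a b : Fin 4 → ℤ) (i j k : Fin 4)
    (h : flat4 a i j k = flat4 b i j k) :
    flat4 (a + Pi.single i 1) j k i = flat4 (b + Pi.single i 1) j k i ∧
    flat4 (a - Pi.single k 1) k i j = flat4 (b - Pi.single k 1) k i j := by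
  have hab := proj4_toE4_eq_of_flat4_eq h
  simp only [sub_eq_add_neg, flat4_add, hab, and_self]

/-- the local trajectory is specified uniquely by the flat
tetrahedron together with the gradient. -/
theorem stmt15 (a b : Fin 4 → ℤ) (i j k : Fin 4)
    (hij : i ≠ j) (hik : i ≠ k) (hjk : j ≠ k)
    (h : flat4 a i j k = flat4 b i j k) :
    flat4 (a + Pi.single i 1) j k i = flat4 (b + Pi.single i 1) j k i ∧
    flat4 (a - Pi.single k 1) k i j = flat4 (b - Pi.single k 1) k i j :=
  stmt15_general a b i j k h
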